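/- arXiv:0807.1359 — 2 statements merged into one kernel-verified Lean document; each statement's English description precedes it below -/
import Mathlib

section
/- Let A : ℝ → ℝ be nondecreasing and Lipschitz continuous with Lipschitz constant L_A ≥ 0, let Δt, Δx > 0, set μ = Δt/Δx², and assume 4μ·L_A ≤ 1. Then for all real numbers c, e, w, n, s, the pure diffusion update H₀(c, e, w, n, s) = c + μ(A(e) + A(w) + A(n) + A(s) − 4A(c)) satisfies min{c, e, w, n, s} ≤ H₀(c, e, w, n, s) ≤ max{c, e, w, n, s}. -/
/-!
Each neighbour contributes `μ (A(uᵢ) - A(c))`, which by monotonicity is at most `μ (A(M) - A(c))`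
for an upper bound `M` of the stencil, and by the Lipschitz bound at most `μ L (M - c)`.
With `k` neighbours the update is therefore at most `c + kμL (M - c)`, which the CFL condition
`kμL ≤ 1` keeps below `M`. The lower bound is the upper bound for the reflected flux `x ↦ -A(-x)`.
-/

open Finset

noncomputable def diffusionUpdate {ι : Type*} [Fintype ι] (A : ℝ → ℝ) (μ c : ℝ) (u : ι → ℝ) : ℝ :=
  c + μ * ∑ i, (A (u i) - A c)

section DiffusionUpdate

variable {ι : Type*} [Fintype ι] {A : ℝ → ℝ} {L μ : ℝ}

theorem diffusionUpdate_le (hA : Monotone A) (hL : ∀ x y, y ≤ x → A x - A y ≤ L * (x - y))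
    (hμ : 0 ≤ μ) (hCFL : Fintype.card ι * μ * L ≤ 1) {c M : ℝ} {u : ι → ℝ}
    (hc : c ≤ M) (hu : ∀ i, u i ≤ M) : diffusionUpdate A μ c u ≤ M := by
  have hsum : ∑ i, (A (u i) - A c) ≤ Fintype.card ι * (L * (M - c)) := calc
    ∑ i, (A (u i) - A c) ≤ ∑ _i : ι, (A M - A c) :=
      sum_le_sum fun i _ => sub_le_sub_right (hA (hu i)) _
    _ = Fintype.card ι * (A M - A c) := by rw [sum_const, card_univ, nsmul_eq_mul]
    _ ≤ Fintype.card ι * (L * (M - c)) := by gcongr; exact hL M c hc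
  calc diffusionUpdate A μ c u
      ≤ c + μ * (Fintype.card ι * (L * (M - c))) := by
        unfold diffusionUpdate; gcongr
    _ = c + (Fintype.card ι * μ * L) * (M - c) := by ring
    _ ≤ c + 1 * (M - c) := by gcongr
    _ = M := by ring

theorem diffusionUpdate_reflect (A : ℝ → ℝ) (μ c : ℝ) (u : ι → ℝ) :
    diffusionUpdate (fun x => -A (-x)) μ (-c) (fun i => -u i) = -diffusionUpdate A μ c u := by
  have hterm : ∀ i, -A (- -u i) - -A (- -c) = -(A (u i) - A c) := fun i => by
    simp only [neg_neg]; ring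
  simp only [diffusionUpdate, hterm, sum_neg_distrib]
  ring

theorem le_diffusionUpdate (hA : Monotone A) (hL : ∀ x y, y ≤ x → A x - A y ≤ L * (x - y))
    (hμ : 0 ≤ μ) (hCFL : Fintype.card ι * μ * L ≤ 1) {c m : ℝ} {u : ι → ℝ}
    (hc : m ≤ c) (hu : ∀ i, m ≤ u i) : m ≤ diffusionUpdate A μ c u := by
  have hA' : Monotone fun x => -A (-x) := fun x y hxy => neg_le_neg (hA (neg_le_neg hxy))
  have hL' : ∀ x y, y ≤ x → -A (-x) - -A (-y) ≤ L * (x - y) := fun x y hxy => by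
    have := hL (-y) (-x) (neg_le_neg hxy)
    linarith
  have := diffusionUpdate_le hA' hL' hμ hCFL (neg_le_neg hc) (u := fun i => -u i)
    fun i => neg_le_neg (hu i)
  rw [diffusionUpdate_reflect] at this
  exact neg_le_neg_iff.mp this

end DiffusionUpdate

theorem fv_diffusion_max_principle_general (A : ℝ → ℝ) (LA Δt Δx : ℝ)
    (hA_mono : Monotone A)
    (hA_lip : ∀ x y : ℝ, |A x - A y| ≤ LA * |x - y|)
    (hΔt : 0 < Δt)
    (hCFL : 4 * (Δt / Δx ^ 2) * LA ≤ 1) :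
    ∀ c e w n s : ℝ,
      min c (min e (min w (min n s))) ≤
          c + (Δt / Δx ^ 2) * (A e + A w + A n + A s - 4 * A c) ∧
      c + (Δt / Δx ^ 2) * (A e + A w + A n + A s - 4 * A c) ≤
          max c (max e (max w (max n s))) := by
  intro c e w n s
  have hL : ∀ x y, y ≤ x → A x - A y ≤ LA * (x - y) := fun x y hxy => by
    simpa [abs_of_nonneg (sub_nonneg.mpr hxy)] using (le_abs_self _).trans (hA_lip x y)
  have hμ : 0 ≤ Δt / Δx ^ 2 := div_nonneg hΔt.le (sq_nonneg Δx)
  have hCFL' : Fintype.card (Fin 4) * (Δt / Δx ^ 2) * LA ≤ 1 := by simpa using hCFL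
  have hstencil : c + (Δt / Δx ^ 2) * (A e + A w + A n + A s - 4 * A c) =
      diffusionUpdate A (Δt / Δx ^ 2) c ![e, w, n, s] := by
    simp only [diffusionUpdate, Fin.sum_univ_four, Matrix.cons_val]
    ring
  rw [hstencil]
  refine ⟨le_diffusionUpdate hA_mono hL hμ hCFL' (min_le_left _ _) ?_,
    diffusionUpdate_le hA_mono hL hμ hCFL' (le_max_left _ _) ?_⟩ <;>
  · intro i
    fin_cases i <;> simp

/-- Discrete maximum principle: if `A` is nondecreasing and Lipschitz with
constant `L_A`, and the CFL condition `4μ·L_A ≤ 1` holds with `μ = Δt/Δx²`,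
then the pure diffusion update
`H₀(c,e,w,n,s) = c + μ(A(e) + A(w) + A(n) + A(s) - 4A(c))`
stays between the minimum and the maximum of its five arguments. -/
theorem fv_diffusion_max_principle (A : ℝ → ℝ) (LA Δt Δx : ℝ)
    (hA_mono : Monotone A) (hLA : 0 ≤ LA)
    (hA_lip : ∀ x y : ℝ, |A x - A y| ≤ LA * |x - y|)
    (hΔt : 0 < Δt) (hΔx : 0 < Δx)
    (hCFL : 4 * (Δt / Δx ^ 2) * LA ≤ 1) :
    ∀ c e w n s : ℝ,
      min c (min e (min w (min n s))) ≤
          c + (Δt / Δx ^ 2) * (A e + A w + A n + A s - 4 * A c) ∧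
      c + (Δt / Δx ^ 2) * (A e + A w + A n + A s - 4 * A c) ≤
          max c (max e (max w (max n s))) :=
  fv_diffusion_max_principle_general A LA Δt Δx hA_mono hA_lip hΔt hCFL
end

section
/- Let s be a positive natural number, γ̃₁, …, γ̃ₛ real numbers, and u : ℤ² → ℝ a set of fine-level cell values. Define the coarse values w : ℤ² → ℝ by the projection w_{i,j} = (1/4) Σ_{e₁,e₂∈{0,1}} u_{2i+e₁,2j+e₂}, define the predicted values ŵ_{2i+e₁,2j+e₂} from w by the prediction operator ŵ_{2i+e₁,2j+e₂} = w_{i,j} − (−1)^{e₁}Q_x(i,j) − (−1)^{e₂}Q_y(i,j) + (−1)^{e₁+e₂}Q_{xy}(i,j), and define the details d_{e₁,e₂}(i,j) = u_{2i+e₁,2j+e₂} − ŵ_{2i+e₁,2j+e₂}. Then for every (i,j) ∈ ℤ²: (a) d_{0,0}(i,j) + d_{0,1}(i,j) + d_{1,0}(i,j) + d_{1,1}(i,j) = 0; and (b) consequently each of the four fine values u_{2i+e₁,2j+e₂} is determined by the coarse values w and the three details d_{0,0}(i,j), d_{0,1}(i,j), d_{1,0}(i,j), via u_{2i+e₁,2j+e₂}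 = ŵ_{2i+e₁,2j+e₂} + d_{e₁,e₂}(i,j) with d_{1,1}(i,j) = −d_{0,0}(i,j) − d_{0,1}(i,j) − d_{1,0}(i,j). -/
/-! Each sign `(-1)^e` cancels when summed over the two values of `e`, so the four predicted sons
sum to four times the parent value whatever `Qx`, `Qy`, `Qxy` are: the prediction is conservative.
The projection says the same of the exact sons, hence the four details sum to zero. -/

theorem prediction_sons_sum {R : Type*} [CommRing R] (w qx qy qxy : R) (p : ℕ → ℕ → R)
    (hp : ∀ e₁ e₂ : ℕ, p e₁ e₂ =
      w - (-1 : R) ^ e₁ * qx - (-1 : R) ^ e₂ * qy + (-1 : R) ^ (e₁ + e₂) * qxy) :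
    p 0 0 + p 0 1 + p 1 0 + p 1 1 = 4 * w := by
  simp only [hp]
  ring

theorem four_sons_equiv_parent_and_three_details_general
    (u : ℤ → ℤ → ℝ) (w : ℤ → ℤ → ℝ)
    (hw : ∀ i j : ℤ, w i j = (1 / 4 : ℝ) *
      (u (2 * i) (2 * j) + u (2 * i) (2 * j + 1) +
        u (2 * i + 1) (2 * j) + u (2 * i + 1) (2 * j + 1)))
    (Qx Qy Qxy : ℤ → ℤ → ℝ)
    (pred : ℤ → ℤ → ℕ → ℕ → ℝ)
    (hpred : ∀ (i j : ℤ) (e₁ e₂ : ℕ), pred i j e₁ e₂ =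
      w i j - (-1 : ℝ) ^ e₁ * Qx i j - (-1 : ℝ) ^ e₂ * Qy i j +
        (-1 : ℝ) ^ (e₁ + e₂) * Qxy i j)
    (d : ℕ → ℕ → ℤ → ℤ → ℝ)
    (hd : ∀ (e₁ e₂ : ℕ) (i j : ℤ), d e₁ e₂ i j =
      u (2 * i + (e₁ : ℤ)) (2 * j + (e₂ : ℤ)) - pred i j e₁ e₂) :
    ∀ i j : ℤ,
      (d 0 0 i j + d 0 1 i j + d 1 0 i j + d 1 1 i j = 0) ∧
      (∀ e₁ e₂ : ℕ, e₁ ≤ 1 → e₂ ≤ 1 →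
        u (2 * i + (e₁ : ℤ)) (2 * j + (e₂ : ℤ)) = pred i j e₁ e₂ + d e₁ e₂ i j) ∧
      d 1 1 i j = -d 0 0 i j - d 0 1 i j - d 1 0 i j := by
  intro i j
  have hpred_sum := prediction_sons_sum (w i j) (Qx i j) (Qy i j) (Qxy i j) (pred i j) (hpred i j)
  have hdetails : d 0 0 i j + d 0 1 i j + d 1 0 i j + d 1 1 i j = 0 := by
    simp only [hd, Nat.cast_zero, Nat.cast_one, add_zero]
    linear_combination (-4 : ℝ) * hw i j - hpred_sum
  refine ⟨hdetails, fun e₁ e₂ _ _ => ?_, by linear_combination hdetails⟩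
  rw [hd]
  ring

/-- Knowledge of the four son cell averages is equivalent to knowledge of the
parent cell average plus three independent details: the four details sum to
zero, each fine value is the predicted value plus the corresponding detail,
and the fourth detail is determined by the other three. -/
theorem four_sons_equiv_parent_and_three_details (s : ℕ) (hs : 0 < s)
    (γ : ℕ → ℝ) (u : ℤ → ℤ → ℝ) (w : ℤ → ℤ → ℝ)
    (hw : ∀ i j : ℤ, w i j = (1 / 4 : ℝ) *
      (u (2 * i) (2 * j) + u (2 * i) (2 * j + 1) +
        u (2 * i + 1) (2 * j) + u (2 * i + 1) (2 * j + 1)))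
    (Qx Qy Qxy : ℤ → ℤ → ℝ)
    (hQx : ∀ i j : ℤ, Qx i j =
      ∑ n ∈ Finset.Icc 1 s, γ n * (w (i + (n : ℤ)) j - w (i - (n : ℤ)) j))
    (hQy : ∀ i j : ℤ, Qy i j =
      ∑ p ∈ Finset.Icc 1 s, γ p * (w i (j + (p : ℤ)) - w i (j - (p : ℤ))))
    (hQxy : ∀ i j : ℤ, Qxy i j =
      ∑ n ∈ Finset.Icc 1 s, γ n * ∑ p ∈ Finset.Icc 1 s, γ p *
        (w (i + (n : ℤ)) (j + (p : ℤ)) - w (i + (n : ℤ)) (j - (p : ℤ)) -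
          w (i - (n : ℤ)) (j + (p : ℤ)) + w (i - (n : ℤ)) (j - (p : ℤ))))
    (pred : ℤ → ℤ → ℕ → ℕ → ℝ)
    (hpred : ∀ (i j : ℤ) (e₁ e₂ : ℕ), pred i j e₁ e₂ =
      w i j - (-1 : ℝ) ^ e₁ * Qx i j - (-1 : ℝ) ^ e₂ * Qy i j +
        (-1 : ℝ) ^ (e₁ + e₂) * Qxy i j)
    (d : ℕ → ℕ → ℤ → ℤ → ℝ)
    (hd : ∀ (e₁ e₂ : ℕ) (i j : ℤ), d e₁ e₂ i j =
      u (2 * i + (e₁ : ℤ)) (2 * j + (e₂ : ℤ)) - pred i j e₁ e₂) :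
    ∀ i j : ℤ,
      (d 0 0 i j + d 0 1 i j + d 1 0 i j + d 1 1 i j = 0) ∧
      (∀ e₁ e₂ : ℕ, e₁ ≤ 1 → e₂ ≤ 1 →
        u (2 * i + (e₁ : ℤ)) (2 * j + (e₂ : ℤ)) = pred i j e₁ e₂ + d e₁ e₂ i j) ∧
      d 1 1 i j = -d 0 0 i j - d 0 1 i j - d 1 0 i j :=
  four_sons_equiv_parent_and_three_details_general u w hw Qx Qy Qxy pred hpred d hd
end
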